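/- For every positive integer n, the coefficient of x^{2n} y^{2n} in the polynomial ((-x+y+1)(x-y+1)(x+y-1)(x+y+1)(x^2+y^2+1))^n ∈ ℤ[x,y] equals F_n = ∑_{k=0}^{n} (-1)^k 8^{n-k} C(n,k) ∑_{j=0}^{k} C(k,j)^3, i.e. Zagier's sporadic sequence F is the constant term sequence of the Laurent polynomial (-x+y+1)(x-y+1)(x+y-1)(x+y+1)(x^2+y^2+1)/(x^2 y^2). -/

import Mathlib

/-!
The polynomial is `Q(x², y²)` for `Q(u, v) = 8uv - R(u, v)` with
`R(u, v) = (1 - u - v)(1 - u + v)(1 + u - v)`, so by the binomial theorem it suffices that the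
coefficient of `u^k v^k` in `R^k` is the Franel number `∑ C(k,j)^3`. Since
`R = (v² - (1 - u)²)(v - (1 + u))`, extracting the coefficient of `v^k` leaves
`∑ C(k,i) C(k,2i) [u^k] ((1 + u)²)^i (-(1 - u)²)^(k-i)`. These coefficients of `u^k` are Gessel's
super Catalan numbers `(2m)! (2n)! / (m! n! (m+n)!)`: both satisfy `S(m+1,n) + S(m,n+1) = 4 S(m,n)`,
the coefficients because `(1 + u)² - (1 - u)² = 4u`. The sum then becomes `∑ C(k,i)² C(2i,k)`,
which equals `∑ C(k,j)^3` by Strehl's identity.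
-/

open MvPolynomial Finset

/-- Zagier's sporadic sequence F. -/
def zagierF (n : ℕ) : ℤ :=
  ∑ k ∈ range (n + 1),
    (-1) ^ k * 8 ^ (n - k) * (n.choose k : ℤ) *
      ∑ j ∈ range (k + 1), (k.choose j : ℤ) ^ 3

namespace Nat

theorem sum_choose_mul_choose_add_sub {a b : ℕ} (h : b ≤ a) :
    ∑ t ∈ range (b + 1), b.choose t * a.choose (a - b + t) = (b + a).choose b := by
  rw [add_choose_eq, Finset.Nat.sum_antidiagonal_eq_sum_range_succ_mk]
  refine sum_congr rfl fun t ht => ?_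
  rw [← choose_symm (by omega : b - t ≤ a), show a - (b - t) = a - b + t by
    have := mem_range.1 ht; omega]

theorem sum_choose_sq_mul_choose_mul_choose (a b : ℕ) :
    ∑ i ∈ range (a + b + 1), (a + b).choose i ^ 2 * (i.choose a * i.choose b) =
      (a + b).choose a ^ 3 := by
  wlog hba : b ≤ a generalizing a b
  · rw [choose_symm_add]
    simpa only [add_comm b a, mul_comm (Nat.choose _ b)] using this b a (by omega)
  have hlow : ∀ i ∈ range a, (a + b).choose i ^ 2 * (i.choose a * i.choose b) = 0 := fun i hi => by
    rw [choose_eq_zero_of_lt (mem_range.1 hi), zero_mul, mul_zero]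
  have hhigh : ∀ t ∈ range (b + 1), (a + b).choose (a + t) ^ 2 *
      ((a + t).choose a * (a + t).choose b) =
        (a + b).choose a ^ 2 * (b.choose t * a.choose (a - b + t)) := by
    intro t ht
    have h₁ := choose_mul (n := a + b) (le_add_right a t : a ≤ a + t)
    have h₂ := choose_mul (n := a + b) (by omega : b ≤ a + t)
    rw [Nat.add_sub_cancel_left, Nat.add_sub_cancel_left] at h₁
    rw [Nat.add_sub_cancel, show a + t - b = a - b + t by omega, ← choose_symm_add] at h₂
    calc _ = ((a + b).choose (a + t) * (a + t).choose a) *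
          ((a + b).choose (a + t) * (a + t).choose b) := by ring
      _ = _ := by rw [h₁, h₂]; ring
  rw [add_assoc, sum_range_add, sum_eq_zero hlow, zero_add, sum_congr rfl hhigh, ← mul_sum,
    sum_choose_mul_choose_add_sub hba, add_comm b a, choose_symm_add]
  ring

theorem sum_choose_sq_mul_choose_two_mul (k : ℕ) :
    ∑ i ∈ range (k + 1), k.choose i ^ 2 * (2 * i).choose k = ∑ j ∈ range (k + 1), k.choose j ^ 3 :=
  calc _ = ∑ i ∈ range (k + 1), ∑ p ∈ antidiagonal k,
        k.choose i ^ 2 * (i.choose p.1 * i.choose p.2) := by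
        simp only [two_mul, add_choose_eq, mul_sum]
    _ = ∑ p ∈ antidiagonal k, k.choose p.1 ^ 3 := by
        rw [sum_comm]
        refine sum_congr rfl fun p hp => ?_
        rw [← mem_antidiagonal.1 hp]
        exact sum_choose_sq_mul_choose_mul_choose p.1 p.2
    _ = _ := Finset.Nat.sum_antidiagonal_eq_sum_range_succ (fun i _ => k.choose i ^ 3) k

end Nat

open Nat in
noncomputable def superCatalan (m n : ℕ) : ℚ := (2 * m)! * (2 * n)! / (m ! * n ! * (m + n)!)

open Nat in
theorem superCatalan_succ_left_add_succ_right (m n : ℕ) :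
    superCatalan (m + 1) n + superCatalan m (n + 1) = 4 * superCatalan m n := by
  simp only [superCatalan, show 2 * (m + 1) = 2 * m + 1 + 1 by ring,
    show 2 * (n + 1) = 2 * n + 1 + 1 by ring, show m + 1 + n = m + n + 1 by ring,
    show m + (n + 1) = m + n + 1 by ring, factorial_succ]
  push_cast
  field_simp
  ring

namespace Polynomial

theorem coeff_X_add_one_sq_pow_mul_neg_X_sub_one_sq_pow (m n : ℕ) :
    ((((X + 1) ^ 2) ^ m * (-(X - 1) ^ 2) ^ n : ℤ[X]).coeff (m + n) : ℚ) = superCatalan m n := by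
  induction n generalizing m with
  | zero =>
    rw [pow_zero, mul_one, add_zero, ← pow_mul, coeff_X_add_one_pow, Int.cast_natCast,
      Nat.cast_choose ℚ (by omega), show 2 * m - m = m by omega, superCatalan]
    simp
  | succ n ih =>
    have hsplit : ((X + 1 : ℤ[X]) ^ 2) ^ m * (-(X - 1) ^ 2) ^ (n + 1) =
        X * (4 * (((X + 1) ^ 2) ^ m * (-(X - 1) ^ 2) ^ n)) -
          ((X + 1) ^ 2) ^ (m + 1) * (-(X - 1) ^ 2) ^ n := by ring
    rw [hsplit, coeff_sub, ← add_assoc, coeff_X_mul, coeff_ofNat_mul,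
      show m + n + 1 = m + 1 + n by ring]
    push_cast
    rw [ih, ih, ← superCatalan_succ_left_add_succ_right]
    ring

theorem coeff_X_sq_add_C_pow_mul_X_add_C_pow {S : Type*} [CommSemiring S] (a b : S) (k : ℕ) :
    ((X ^ 2 + C a) ^ k * (X + C b) ^ k).coeff k =
      ∑ i ∈ range (k + 1), (k.choose i * k.choose (2 * i) : ℕ) * (a ^ (k - i) * b ^ (2 * i)) := by
  rw [add_pow, sum_mul, finsetSum_coeff]
  refine sum_congr rfl fun i _ => ?_
  rw [show (X ^ 2) ^ i * C a ^ (k - i) * (k.choose i : S[X]) * (X + C b) ^ k =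
      X ^ (2 * i) * (C (a ^ (k - i) * k.choose i) * (X + C b) ^ k) by
    rw [← pow_mul, map_mul, map_pow, map_natCast]; ring,
    coeff_X_pow_mul', coeff_C_mul, coeff_X_add_C_pow]
  split_ifs with h
  · rw [show k - (k - 2 * i) = 2 * i by omega, Nat.choose_symm h]
    push_cast
    ring
  · rw [Nat.choose_eq_zero_of_lt (by omega : k < 2 * i)]
    simp

theorem choose_mul_choose_two_mul_mul_coeff_eq (k i : ℕ) (hi : i ≤ k) :
    (k.choose i * k.choose (2 * i) : ℤ) *
        (((X + 1) ^ 2) ^ i * (-(X - 1) ^ 2) ^ (k - i) : ℤ[X]).coeff k =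
      k.choose i ^ 2 * (2 * (k - i)).choose k := by
  rcases le_or_gt (2 * i) k with h | h
  · have hcoeff := coeff_X_add_one_sq_pow_mul_neg_X_sub_one_sq_pow i (k - i)
    rw [Nat.add_sub_cancel' hi] at hcoeff
    qify
    rw [hcoeff, superCatalan, Nat.cast_choose ℚ hi, Nat.cast_choose ℚ h,
      Nat.cast_choose ℚ (by omega : k ≤ 2 * (k - i)), show 2 * (k - i) - k = k - 2 * i by omega,
      Nat.add_sub_cancel' hi]
    field_simp
  · rw [Nat.choose_eq_zero_of_lt h, Nat.choose_eq_zero_of_lt (by omega : 2 * (k - i) < k)]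
    simp

end Polynomial

namespace Polynomial.Bivariate

open scoped Polynomial.Bivariate

theorem coeff_equivMvPolynomial {R : Type*} [CommSemiring R] (p : R[X][Y]) (d : Fin 2 →₀ ℕ) :
    (equivMvPolynomial R p).coeff d = (p.coeff (d 1)).coeff (d 0) := by
  induction p using Polynomial.induction_on' with
  | add p q hp hq => simp only [map_add, MvPolynomial.coeff_add, coeff_add, hp, hq]
  | monomial n q =>
    induction q using Polynomial.induction_on' with
    | add q r hq hr =>
      simp only [(monomial n).map_add, map_add, MvPolynomial.coeff_add, coeff_add, hq, hr]
    | monomial m r =>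
      have hmono : equivMvPolynomial R (monomial n (monomial m r)) =
          MvPolynomial.monomial (Finsupp.single 0 m + Finsupp.single 1 n) r := by
        simp [← C_mul_X_pow_eq_monomial, MvPolynomial.monomial_eq, mul_assoc]
      have hexp : Finsupp.single 0 m + Finsupp.single 1 n = d ↔ n = d 1 ∧ m = d 0 := by
        constructor
        · rintro rfl
          simp
        · rintro ⟨rfl, rfl⟩
          ext i
          fin_cases i <;> simp
      rw [hmono, MvPolynomial.coeff_monomial, coeff_monomial, apply_ite (coeff · (d 0)),
        coeff_monomial, coeff_zero]
      simp only [hexp, ite_and]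

end Polynomial.Bivariate

namespace MvPolynomial

theorem coeff_monomial_sub_pow {σ R : Type*} [CommRing R] (s : σ →₀ ℕ) (c : R)
    (r : MvPolynomial σ R) (n : ℕ) :
    ((monomial s c - r) ^ n).coeff (n • s) =
      ∑ k ∈ range (n + 1), (-1) ^ k * c ^ (n - k) * n.choose k * (r ^ k).coeff (k • s) := by
  rw [sub_eq_neg_add, add_pow, coeff_sum]
  refine sum_congr rfl fun k hmem => ?_
  have hk : k ≤ n := Nat.lt_succ_iff.1 (mem_range.1 hmem)
  have hsub : n • s - (n - k) • s = k • s := by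
    ext i
    simp only [Finsupp.tsub_apply, Finsupp.smul_apply, smul_eq_mul, ← Nat.sub_mul,
      Nat.sub_sub_self hk]
  rw [show (-r) ^ k * monomial s c ^ (n - k) * (n.choose k : MvPolynomial σ R) =
      ((-1) ^ k * n.choose k : R) • (r ^ k * monomial ((n - k) • s) (c ^ (n - k))) by
    rw [smul_eq_C_mul, neg_pow, monomial_pow]
    simp only [C_mul, C_pow, C_neg, C_1, map_natCast]
    ring,
    coeff_smul, coeff_mul_monomial', if_pos (nsmul_le_nsmul_left (by simp) (Nat.sub_le n k)),
    hsub, smul_eq_mul]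
  ring

end MvPolynomial

open scoped Polynomial.Bivariate in
theorem franel_constant_term (k : ℕ) :
    (((1 - X 0 - X 1) * (1 - X 0 + X 1) * (1 + X 0 - X 1) : MvPolynomial (Fin 2) ℤ) ^ k).coeff
      (k • Finsupp.equivFunOnFinite.symm 1) = ∑ j ∈ range (k + 1), (k.choose j : ℤ) ^ 3 := by
  have hR : ((1 - X 0 - X 1) * (1 - X 0 + X 1) * (1 + X 0 - X 1) : MvPolynomial (Fin 2) ℤ) =
      Polynomial.Bivariate.equivMvPolynomial ℤ ((Y ^ 2 + Polynomial.C (-(Polynomial.X - 1) ^ 2)) *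
        (Y + Polynomial.C (-(Polynomial.X + 1)))) := by
    simp only [map_mul, map_add, map_sub, map_neg, map_pow, map_one,
      Polynomial.Bivariate.equivMvPolynomial_X, Polynomial.Bivariate.equivMvPolynomial_C_X]
    ring
  have hdiag : ∀ i, (k • Finsupp.equivFunOnFinite.symm 1 : Fin 2 →₀ ℕ) i = k := by simp
  rw [hR, ← map_pow, Polynomial.Bivariate.coeff_equivMvPolynomial, hdiag, hdiag, mul_pow,
    Polynomial.coeff_X_sq_add_C_pow_mul_X_add_C_pow, Polynomial.finsetSum_coeff]
  calc _ = ∑ i ∈ range (k + 1), ((k.choose i ^ 2 * (2 * (k - i)).choose k : ℕ) : ℤ) := by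
        refine sum_congr rfl fun i hi => ?_
        rw [pow_mul, neg_sq, Polynomial.coeff_natCast_mul, mul_comm (_ ^ (k - i))]
        exact_mod_cast Polynomial.choose_mul_choose_two_mul_mul_coeff_eq k i
          (Nat.lt_succ_iff.1 (mem_range.1 hi))
    _ = ∑ i ∈ range (k + 1), ((k.choose i ^ 2 * (2 * i).choose k : ℕ) : ℤ) := by
        rw [← sum_range_reflect]
        refine sum_congr rfl fun i hi => ?_
        have hi : i ≤ k := Nat.lt_succ_iff.1 (mem_range.1 hi)
        rw [Nat.add_sub_cancel, Nat.sub_sub_self hi, Nat.choose_symm hi]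
    _ = _ := by
        rw [← Nat.cast_sum, Nat.sum_choose_sq_mul_choose_two_mul]
        push_cast
        rfl

theorem zagierF_constant_term_general (n : ℕ) :
    (((-X 0 + X 1 + 1) * (X 0 - X 1 + 1) * (X 0 + X 1 - 1) * (X 0 + X 1 + 1) *
        (X 0 ^ 2 + X 1 ^ 2 + 1) : MvPolynomial (Fin 2) ℤ) ^ n).coeff
      (Finsupp.equivFunOnFinite.symm fun _ => 2 * n) = zagierF n := by
  have hexpand : ((-X 0 + X 1 + 1) * (X 0 - X 1 + 1) * (X 0 + X 1 - 1) * (X 0 + X 1 + 1) *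
      (X 0 ^ 2 + X 1 ^ 2 + 1) : MvPolynomial (Fin 2) ℤ) =
      expand 2 (monomial (Finsupp.equivFunOnFinite.symm 1) 8 -
        (1 - X 0 - X 1) * (1 - X 0 + X 1) * (1 + X 0 - X 1)) := by
    simp only [monomial_eq, Finsupp.prod_fintype, Finsupp.equivFunOnFinite_symm_apply_apply,
      Pi.one_apply, pow_zero, pow_one, Fin.prod_univ_two, map_ofNat, map_sub, map_mul, map_add,
      map_one, expand_X, implies_true]
    ring
  have hdiag : (Finsupp.equivFunOnFinite.symm fun _ => 2 * n : Fin 2 →₀ ℕ) =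
      2 • n • Finsupp.equivFunOnFinite.symm 1 := by
    ext
    simp
  rw [hexpand, ← map_pow, hdiag, coeff_expand_smul _ two_ne_zero, coeff_monomial_sub_pow]
  simp_rw [franel_constant_term]
  rfl

/-- Zagier's sporadic sequence F is the constant term sequence of the Laurent polynomial
`(-x+y+1)(x-y+1)(x+y-1)(x+y+1)(x²+y²+1)/(x²y²)`: the coefficient of `x^{2n} y^{2n}` in
`((-x+y+1)(x-y+1)(x+y-1)(x+y+1)(x²+y²+1))^n` equals `F_n`. -/
theorem zagierF_constant_term (n : ℕ) (hn : 0 < n) :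
    (((-X 0 + X 1 + 1) * (X 0 - X 1 + 1) * (X 0 + X 1 - 1) * (X 0 + X 1 + 1) *
        (X 0 ^ 2 + X 1 ^ 2 + 1) : MvPolynomial (Fin 2) ℤ) ^ n).coeff
      (Finsupp.equivFunOnFinite.symm fun _ => 2 * n) = zagierF n :=
  zagierF_constant_term_general n
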